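/- Let (F,Ω,⋆) be a stratified fusion system on a group S, let Γ be an F-closed set of subgroups of S such that F is Γ-inductive, let T ≤ S be strongly closed in F, let Q ≤ S, and set V = Q ∩ T (note that V is normal in Q, so Q ≤ N_S(V)). Assume that V ∈ Γ, that V is fully normalized in (F,Ω,⋆), and that Q is fully normalized in N_F(V). Then Q is fully normalized in (F,Ω,⋆). -/

import Mathlib

/-- `F f X Y` asserts that the function `f : S → S` (through its restriction to `X`)
is an `F`-homomorphism from the subgroup `X` to the subgroup `Y`. -/
abbrev HomPred (S : Type*) [Group S] := (S → S) → Subgroup S → Subgroup S → Prop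

/-- A fusion system, with hom-sets given by `F · X Y`, on the subgroup `T`
of the ambient group `S`.  Morphisms are represented by functions `S → S`,
two functions agreeing on `X` representing the same morphism `X → Y`. -/
structure IsFusionSystem {S : Type*} [Group S] (T : Subgroup S) (F : HomPred S) : Prop where
  le_base : ∀ f X Y, F f X Y → X ≤ T ∧ Y ≤ T
  mapsTo : ∀ f X Y, F f X Y → Set.MapsTo f (X : Set S) (Y : Set S)
  injOn : ∀ f X Y, F f X Y → Set.InjOn f (X : Set S)
  map_mul' : ∀ f X Y, F f X Y → ∀ x ∈ X, ∀ y ∈ X, f (x * y) = f x * f y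
  of_eqOn : ∀ f g X Y, F f X Y → Set.EqOn g f (X : Set S) → F g X Y
  conj_mem : ∀ g ∈ T, ∀ X Y : Subgroup S, X ≤ T → Y ≤ T →
    (∀ x ∈ X, g⁻¹ * x * g ∈ Y) → F (fun x => g⁻¹ * x * g) X Y
  comp_mem : ∀ f g X Y Z, F f X Y → F g Y Z → F (g ∘ f) X Z
  restrict_mem : ∀ f X Y X₀ Y₀, F f X Y → X₀ ≤ X → Y₀ ≤ Y →
    Set.MapsTo f (X₀ : Set S) (Y₀ : Set S) → F f X₀ Y₀
  corestrict_mem : ∀ f X Y, F f X Y → F f X (Subgroup.closure (f '' (X : Set S)))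
  inv_mem : ∀ f X Y, F f X Y →
    ∃ g, F g (Subgroup.closure (f '' (X : Set S))) X ∧ ∀ x ∈ X, g (f x) = x

variable {S : Type*} [Group S]

/-- `f` is an `F`-isomorphism from `X` onto `Y`. -/
def IsFIso (F : HomPred S) (f : S → S) (X Y : Subgroup S) : Prop :=
  F f X Y ∧ f '' (X : Set S) = (Y : Set S)

/-- `X^F`, the set of `F`-conjugates of `X`. -/
def FConj (F : HomPred S) (X : Subgroup S) : Set (Subgroup S) :=
  {Y | ∃ f, IsFIso F f X Y}

/-- `N` is normal in the fusion system `F` on the base subgroup `T`: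
`N` is normal in `T` and every `F`-isomorphism `X → Y` extends to an
`F`-isomorphism `XN → YN` mapping `N` onto `N`. -/
def NormalInF (T : Subgroup S) (F : HomPred S) (N : Subgroup S) : Prop :=
  N ≤ T ∧ (∀ g ∈ T, ∀ n ∈ N, g⁻¹ * n * g ∈ N) ∧
    ∀ f X Y, IsFIso F f X Y →
      ∃ g, IsFIso F g (X ⊔ N) (Y ⊔ N) ∧ Set.EqOn g f (X : Set S) ∧
        g '' (N : Set S) = (N : Set S)

/-- The supremum of the lengths of strictly increasing chains in `Ω`
terminating in `A`. -/
noncomputable def dimEnd (Ω : Set (Subgroup S)) (A : Subgroup S) : ℕ :=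
  sSup {n | ∃ c : Fin (n + 1) → Subgroup S,
    StrictMono c ∧ (∀ i, c i ∈ Ω) ∧ c (Fin.last n) = A}

/-- The supremum of the lengths of strictly increasing chains in `Ω`. -/
noncomputable def dimOmega (Ω : Set (Subgroup S)) : ℕ :=
  sSup {n | ∃ c : Fin (n + 1) → Subgroup S, StrictMono c ∧ ∀ i, c i ∈ Ω}

/-- `(Ω, star)` is a stratification on the fusion system `F` on base `T`. -/
structure IsStratification (T : Subgroup S) (F : HomPred S)
    (Ω : Set (Subgroup S)) (star : Subgroup S → Subgroup S) : Prop where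
  omega_le : ∀ A ∈ Ω, A ≤ T
  star_mem : ∀ X : Subgroup S, X ≤ T → star X ∈ Ω
  star_fix : ∀ A ∈ Ω, star A = A
  star_mono : ∀ X Y : Subgroup S, X ≤ T → Y ≤ T → X ≤ Y → star X ≤ star Y
  finDim : ∃ N : ℕ, ∀ n : ℕ,
    (∃ c : Fin (n + 1) → Subgroup S, StrictMono c ∧ ∀ i, c i ∈ Ω) → n ≤ N
  conj_invariant : ∀ A ∈ Ω, ∀ f Y, IsFIso F f A Y → Y ∈ Ω
  le_star : ∀ X : Subgroup S, X ≤ T → X ≤ star X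
  extend_star : ∀ f X Y, IsFIso F f X Y →
    ∃ g, IsFIso F g (star X) (star Y) ∧ Set.EqOn g f (X : Set S)

/-- `dim_Ω(X)`, the supremum of the lengths of strictly increasing chains
in `Ω` terminating in `X⋆`. -/
noncomputable def dimStar (Ω : Set (Subgroup S)) (star : Subgroup S → Subgroup S)
    (X : Subgroup S) : ℕ :=
  dimEnd Ω (star X)

/-- `V` is fully normalized in the stratified fusion system `(F, Ω, star)` on base `T`. -/
def FullyNormalizedIn (T : Subgroup S) (F : HomPred S) (Ω : Set (Subgroup S))
    (star : Subgroup S → Subgroup S) (V : Subgroup S) : Prop :=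
  ∀ U ∈ FConj F V, dimStar Ω star (Subgroup.normalizer (U : Set S) ⊓ T) ≤ dimStar Ω star (Subgroup.normalizer (V : Set S) ⊓ T)

/-- `V` is fully centralized in the stratified fusion system `(F, Ω, star)` on base `T`. -/
def FullyCentralizedIn (T : Subgroup S) (F : HomPred S) (Ω : Set (Subgroup S))
    (star : Subgroup S → Subgroup S) (V : Subgroup S) : Prop :=
  ∀ U ∈ FConj F V,
    dimStar Ω star ((Subgroup.centralizer (U : Set S) ⊓ T) ⊔ U) ≤
      dimStar Ω star ((Subgroup.centralizer (V : Set S) ⊓ T) ⊔ V)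

/-- `Γ` is an `F`-closed set of subgroups. -/
def FClosed (F : HomPred S) (Γ : Set (Subgroup S)) : Prop :=
  Γ.Nonempty ∧ (∀ X ∈ Γ, ∀ Y ∈ FConj F X, Y ∈ Γ) ∧
    ∀ X ∈ Γ, ∀ Y : Subgroup S, X ≤ Y → Y ∈ Γ

/-- `Y` is normalizer-inductive in the fusion system `F` on base `T`. -/
def NormalizerInductive (T : Subgroup S) (F : HomPred S) (Y : Subgroup S) : Prop :=
  ∀ X ∈ FConj F Y, ∃ φ, F φ (Subgroup.normalizer (X : Set S) ⊓ T) (Subgroup.normalizer (Y : Set S) ⊓ T) ∧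
    φ '' (X : Set S) = (Y : Set S)

/-- `Y` is centralizer-inductive in the fusion system `F` on base `T`. -/
def CentralizerInductive (T : Subgroup S) (F : HomPred S) (Y : Subgroup S) : Prop :=
  ∀ X ∈ FConj F Y, ∃ ψ,
    F ψ ((Subgroup.centralizer (X : Set S) ⊓ T) ⊔ X)
        ((Subgroup.centralizer (Y : Set S) ⊓ T) ⊔ Y) ∧
    ψ '' (X : Set S) = (Y : Set S)

/-- `F` is `Γ`-inductive. -/
def GammaInductive (T : Subgroup S) (F : HomPred S) (Γ : Set (Subgroup S)) : Prop :=
  ∀ X ∈ Γ, ∃ Y ∈ FConj F X, NormalizerInductive T F Y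

/-- `F` is inductive (i.e. `Sub(T)`-inductive). -/
def InductiveFS (T : Subgroup S) (F : HomPred S) : Prop :=
  ∀ X : Subgroup S, X ≤ T → ∃ Y ∈ FConj F X, NormalizerInductive T F Y

/-- `⟨Φ⟩_T`: the smallest fusion system on `T` all of whose homomorphisms are
`Famb`-homomorphisms and whose hom-sets contain `Φ`. -/
def GenFS (T : Subgroup S) (Famb : HomPred S) (Φ : HomPred S) : HomPred S :=
  fun f X Y => ∀ E : HomPred S, IsFusionSystem T E →
    (∀ g A B, E g A B → Famb g A B) → (∀ g A B, Φ g A B → E g A B) → E f X Y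

/-- The generating set `Φ` for `N_F(V)`: `F`-isomorphisms between subgroups of
`N_S(V)` extending to `F`-isomorphisms `XV → YV` restricting to an automorphism of `V`. -/
def NPhi (F : HomPred S) (V : Subgroup S) : HomPred S :=
  fun f X Y => X ≤ Subgroup.normalizer (V : Set S) ∧ Y ≤ Subgroup.normalizer (V : Set S) ∧ IsFIso F f X Y ∧
    ∃ g, IsFIso F g (X ⊔ V) (Y ⊔ V) ∧ Set.EqOn g f (X : Set S) ∧
      g '' (V : Set S) = (V : Set S)

/-- The fusion system `N_F(V)` on `N_S(V)`. -/
def NFus (F : HomPred S) (V : Subgroup S) : HomPred S :=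
  GenFS (Subgroup.normalizer (V : Set S)) F (NPhi F V)

/-- The generating set `Ψ` for `C_F(V)`: `F`-isomorphisms between subgroups of
`C_S(V)` extending to `F`-isomorphisms `XV → YV` restricting to the identity on `V`. -/
def CPsi (F : HomPred S) (V : Subgroup S) : HomPred S :=
  fun f X Y => X ≤ Subgroup.centralizer (V : Set S) ∧
    Y ≤ Subgroup.centralizer (V : Set S) ∧ IsFIso F f X Y ∧
    ∃ g, IsFIso F g (X ⊔ V) (Y ⊔ V) ∧ Set.EqOn g f (X : Set S) ∧ ∀ v ∈ V, g v = v

/-- The fusion system `C_F(V)` on `C_S(V)`. -/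
def CFus (F : HomPred S) (V : Subgroup S) : HomPred S :=
  GenFS (Subgroup.centralizer (V : Set S)) F (CPsi F V)

/-- `X ↦ X• = (VX)⋆ ⊓ N_S(V)`. -/
def bulletStar (star : Subgroup S → Subgroup S) (V : Subgroup S) :
    Subgroup S → Subgroup S :=
  fun X => star (V ⊔ X) ⊓ Subgroup.normalizer (V : Set S)

/-- `N_Ω(V) = {X• : X ≤ N_S(V)}`. -/
def bulletOmega (star : Subgroup S → Subgroup S) (V : Subgroup S) : Set (Subgroup S) :=
  {A | ∃ X : Subgroup S, X ≤ Subgroup.normalizer (V : Set S) ∧ A = bulletStar star V X}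

/-- `A ↦ A° = (VA)⋆ ⊓ C_S(V)`. -/
def circStar (star : Subgroup S → Subgroup S) (V : Subgroup S) :
    Subgroup S → Subgroup S :=
  fun A => star (V ⊔ A) ⊓ Subgroup.centralizer (V : Set S)

/-- `C_Ω(V) = {A° : A ≤ C_S(V)}`. -/
def circOmega (star : Subgroup S → Subgroup S) (V : Subgroup S) : Set (Subgroup S) :=
  {A | ∃ X : Subgroup S, X ≤ Subgroup.centralizer (V : Set S) ∧ A = circStar star V X}

/-- `T` is strongly closed in `F`. -/
def StronglyClosedF (F : HomPred S) (T : Subgroup S) : Prop :=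
  ∀ X : Subgroup S, X ≤ T → ∀ Y ∈ FConj F X, Y ≤ T

/-!
By Lemma 2.9 of the paper (`normalizerInductive_of_fullyNormalized`), `V = Q ∩ T` is
normalizer-inductive in `F`. Since `T` is strongly closed, `N_S(U) ≤ N_S(U ∩ T)` for every
`F`-conjugate `U` of `Q`, so a map `N_S(U ∩ T) → N_S(V)` taking `U ∩ T` to `V` carries `U` into
`N_S(V)`, onto an `N_F(V)`-conjugate of `Q`. Applied to a normalizer-inductive `F`-conjugate of `Q`
(one exists because `Q ≥ V` lies in `Γ`), this gives an `N_F(V)`-conjugate of `Q` that is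
normalizer-inductive in `N_F(V)`; Lemma 2.9 for the stratified system `(N_F(V), N_Ω(V), •)` then
makes `Q` normalizer-inductive in `N_F(V)`. Composing the two kinds of maps, `Q` is
normalizer-inductive in `F`, and normalizer-inductive subgroups are fully normalized.
-/

open Set Subgroup

def imageSubgroup (f : S → S) (X : Subgroup S) : Subgroup S :=
  Subgroup.closure (f '' X)

namespace IsFusionSystem

variable {T : Subgroup S} {F : HomPred S} {f g : S → S} {X Y Z : Subgroup S}

theorem map_one (hF : IsFusionSystem T F) (hf : F f X Y) : f 1 = 1 := by
  have h := hF.map_mul' f X Y hf 1 (one_mem X) 1 (one_mem X)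
  rw [one_mul] at h
  exact mul_eq_left.mp h.symm

theorem map_inv (hF : IsFusionSystem T F) (hf : F f X Y) {x : S} (hx : x ∈ X) :
    f x⁻¹ = (f x)⁻¹ :=
  eq_inv_of_mul_eq_one_left <| by
    rw [← hF.map_mul' f X Y hf _ (X.inv_mem hx) _ hx, inv_mul_cancel, hF.map_one hf]

theorem coe_imageSubgroup (hF : IsFusionSystem T F) (hf : F f X Y) :
    (imageSubgroup f X : Set S) = f '' X := by
  let K : Subgroup S :=
    { carrier := f '' X
      one_mem' := ⟨1, one_mem X, hF.map_one hf⟩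
      mul_mem' := by
        rintro _ _ ⟨x, hx, rfl⟩ ⟨y, hy, rfl⟩
        exact ⟨x * y, mul_mem hx hy, hF.map_mul' f X Y hf x hx y hy⟩
      inv_mem' := by
        rintro _ ⟨x, hx, rfl⟩
        exact ⟨x⁻¹, X.inv_mem hx, hF.map_inv hf hx⟩ }
  exact congrArg SetLike.coe (Subgroup.closure_eq K)

theorem imageSubgroup_le (hF : IsFusionSystem T F) (hf : F f X Y) : imageSubgroup f X ≤ Y :=
  (Subgroup.closure_le Y).2 (hF.mapsTo f X Y hf).image_subset

theorem restrict (hF : IsFusionSystem T F) (hf : F f X Y) {X₀ : Subgroup S} (h : X₀ ≤ X) :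
    F f X₀ Y :=
  hF.restrict_mem f X Y X₀ Y hf h le_rfl ((hF.mapsTo f X Y hf).mono_left h)

theorem isFIso_imageSubgroup (hF : IsFusionSystem T F) (hf : F f X Y) {X₀ : Subgroup S}
    (h : X₀ ≤ X) : IsFIso F f X₀ (imageSubgroup f X₀) :=
  ⟨hF.corestrict_mem f X₀ Y (hF.restrict hf h), (hF.coe_imageSubgroup (hF.restrict hf h)).symm⟩

theorem image_le (hF : IsFusionSystem T F) (hf : F f X Y) {X₀ Y₀ : Subgroup S} (hX₀ : X₀ ≤ X)
    (h : f '' X₀ = Y₀) : Y₀ ≤ Y := by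
  rw [← SetLike.coe_subset_coe, ← h]
  exact ((hF.mapsTo f X Y hf).mono_left hX₀).image_subset

theorem isFIso_of_image (hF : IsFusionSystem T F) (hf : F f X Y) {X₀ Y₀ : Subgroup S}
    (hX₀ : X₀ ≤ X) (h : f '' X₀ = Y₀) : IsFIso F f X₀ Y₀ :=
  ⟨hF.restrict_mem f X Y X₀ Y₀ hf hX₀ (hF.image_le hf hX₀ h) (h ▸ mapsTo_image f _), h⟩

theorem imageSubgroup_eq (hF : IsFusionSystem T F) (hf : IsFIso F f X Y) :
    imageSubgroup f X = Y :=
  SetLike.coe_injective ((hF.coe_imageSubgroup hf.1).trans hf.2)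

theorem exists_invOn (hF : IsFusionSystem T F) (hf : IsFIso F f X Y) :
    ∃ g, IsFIso F g Y X ∧ InvOn g f X Y := by
  obtain ⟨g, hg, hgf⟩ := hF.inv_mem f X Y hf.1
  change F g (imageSubgroup f X) X at hg
  rw [hF.imageSubgroup_eq hf] at hg
  have hgf : LeftInvOn g f X := hgf
  refine ⟨g, ⟨hg, ?_⟩, hgf, hf.2 ▸ hgf.rightInvOn_image⟩
  rw [← hf.2, hgf.image_image]

theorem isFIso_comp (hF : IsFusionSystem T F) (hf : IsFIso F f X Y) (hg : IsFIso F g Y Z) :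
    IsFIso F (g ∘ f) X Z :=
  ⟨hF.comp_mem f g X Y Z hf.1 hg.1, by rw [image_comp, hf.2, hg.2]⟩

theorem mono_codomain (hF : IsFusionSystem T F) (hf : F f X Y) {Y' : Subgroup S} (hY : Y ≤ Y')
    (hY' : Y' ≤ T) : F f X Y' := by
  have hid := hF.conj_mem 1 (one_mem T) Y Y' (hF.le_base f X Y hf).2 hY'
    (fun y hy => by simpa using hY hy)
  exact hF.of_eqOn _ f X Y' (hF.comp_mem f _ X Y Y' hf hid) (fun x _ => by simp)

theorem fConj_symm (hF : IsFusionSystem T F) (h : Y ∈ FConj F X) : X ∈ FConj F Y := by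
  obtain ⟨f, hf⟩ := h
  obtain ⟨g, hg, -⟩ := hF.exists_invOn hf
  exact ⟨g, hg⟩

theorem fConj_trans (hF : IsFusionSystem T F) (hXY : Y ∈ FConj F X) (hYZ : Z ∈ FConj F Y) :
    Z ∈ FConj F X := by
  obtain ⟨f, hf⟩ := hXY
  obtain ⟨g, hg⟩ := hYZ
  exact ⟨g ∘ f, hF.isFIso_comp hf hg⟩

theorem mapsTo_normalizer (hF : IsFusionSystem T F) (hf : F f X Y) {P P' : Subgroup S}
    (hP : P ≤ X) (hP' : f '' P = P') :
    MapsTo f (X ⊓ normalizer (P : Set S) : Subgroup S) (normalizer (P' : Set S)) := by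
  have hconj : ∀ x ∈ X ⊓ normalizer (P : Set S), ∀ p ∈ P, f x * f p * (f x)⁻¹ ∈ f '' P := by
    rintro x ⟨hxX, hxP⟩ p hp
    have hmul := hF.map_mul' f X Y hf
    refine ⟨_, (mem_normalizer_iff.mp hxP p).mp hp, ?_⟩
    rw [hmul _ (mul_mem hxX (hP hp)) _ (X.inv_mem hxX), hmul _ hxX _ (hP hp), hF.map_inv hf hxX]
  intro x hx
  rw [SetLike.mem_coe, ← hP', mem_set_normalizer_iff]
  refine fun b => ⟨?_, fun hb => ?_⟩
  · rintro ⟨p, hp, rfl⟩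
    exact hconj x hx p hp
  · obtain ⟨p, hp, hpb⟩ := hb
    have h := hconj x⁻¹ (Subgroup.inv_mem _ hx) p hp
    rwa [hF.map_inv hf (mem_inf.mp hx).1, inv_inv, hpb, ← mul_assoc, ← mul_assoc,
      inv_mul_cancel, one_mul, inv_mul_cancel_right] at h

theorem mapsTo_sup (hF : IsFusionSystem T F) (hf : F f X Y) {X₁ X₂ Y₁ Y₂ : Subgroup S}
    (hX : X₁ ⊔ X₂ ≤ X) (h₁ : MapsTo f X₁ Y₁) (h₂ : MapsTo f X₂ Y₂) :
    MapsTo f (X₁ ⊔ X₂ : Subgroup S) (Y₁ ⊔ Y₂ : Subgroup S) := by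
  intro x hx
  rw [SetLike.mem_coe, sup_eq_closure] at hx
  have hmemX : ∀ y ∈ Subgroup.closure ((X₁ : Set S) ∪ X₂), y ∈ X := fun y hy =>
    hX (by rwa [sup_eq_closure])
  induction hx using closure_induction with
  | mem y hy => exact hy.elim (fun hy => mem_sup_left (h₁ hy)) (fun hy => mem_sup_right (h₂ hy))
  | one => rw [SetLike.mem_coe, hF.map_one hf]; exact one_mem _
  | mul y z hy hz ihy ihz =>
    rw [SetLike.mem_coe, hF.map_mul' f X Y hf y (hmemX y hy) z (hmemX z hz)]
    exact mul_mem ihy ihz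
  | inv y hy ihy =>
    rw [SetLike.mem_coe, hF.map_inv hf (hmemX y hy)]
    exact Subgroup.inv_mem _ ihy

theorem image_sup (hF : IsFusionSystem T F) (hf : F f X Y) {X₁ X₂ Y₁ Y₂ : Subgroup S}
    (hX : X₁ ⊔ X₂ ≤ X) (h₁ : f '' X₁ = Y₁) (h₂ : f '' X₂ = Y₂) :
    f '' (X₁ ⊔ X₂ : Subgroup S) = (Y₁ ⊔ Y₂ : Subgroup S) := by
  refine (hF.mapsTo_sup hf hX (mapsTo_iff_image_subset.2 h₁.subset)
    (mapsTo_iff_image_subset.2 h₂.subset)).image_subset.antisymm ?_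
  have himage : ∀ {X₀ Y₀ : Subgroup S}, X₀ ≤ X₁ ⊔ X₂ → f '' X₀ = Y₀ →
      Y₀ ≤ imageSubgroup f (X₁ ⊔ X₂) := fun hX₀ hY₀ => by
    rw [← SetLike.coe_subset_coe, hF.coe_imageSubgroup (hF.restrict hf hX), ← hY₀]
    exact image_mono hX₀
  rw [← hF.coe_imageSubgroup (hF.restrict hf hX), SetLike.coe_subset_coe]
  exact sup_le (himage le_sup_left h₁) (himage le_sup_right h₂)

theorem image_inf_normalizer (hF : IsFusionSystem T F) (hf : IsFIso F f X Y) {V : Subgroup S}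
    (hV : V ≤ X) (hfV : f '' V = V) :
    f '' (X ⊓ normalizer (V : Set S) : Subgroup S) = (Y ⊓ normalizer (V : Set S) : Subgroup S) := by
  obtain ⟨g, hg, hinv⟩ := hF.exists_invOn hf
  have hgV : g '' V = V := by simpa only [hfV] using hinv.1.image_image' hV
  have hVY : V ≤ Y := by
    rw [← SetLike.coe_subset_coe, ← hf.2, ← hfV]
    exact image_mono hV
  refine ((hinv.mono (fun _ hx => hx.1) (fun _ hy => hy.1)).bijOn ?_ ?_).image_eq
  · exact fun x hx => ⟨hF.mapsTo f X Y hf.1 hx.1, hF.mapsTo_normalizer hf.1 hV hfV hx⟩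
  · exact fun y hy => ⟨hF.mapsTo g Y X hg.1 hy.1, hF.mapsTo_normalizer hg.1 hVY hgV hy⟩

theorem restrict_normalizer (hF : IsFusionSystem T F) (hf : F f X Y) {X₀ P P' : Subgroup S}
    (hX₀ : X₀ ≤ X ⊓ normalizer (P : Set S)) (hP : P ≤ X) (hfP : f '' P = P') :
    F f X₀ (normalizer (P' : Set S) ⊓ Y) :=
  hF.restrict_mem f X Y X₀ _ hf (hX₀.trans inf_le_left) inf_le_right fun _ hx =>
    ⟨hF.mapsTo_normalizer hf hP hfP (hX₀ hx), hF.mapsTo f X Y hf (hX₀ hx).1⟩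

end IsFusionSystem

theorem conj_image_eq_of_mem_normalizer {V : Subgroup S} {c : S}
    (hc : c ∈ normalizer (V : Set S)) : (fun x => c⁻¹ * x * c) '' V = V := by
  have h := mem_normalizer_iff_conj_image_eq.mp (Subgroup.inv_mem _ hc)
  convert h using 2
  simp

theorem isFusionSystem_genFS {T : Subgroup S} {Famb Φ E₀ : HomPred S}
    (hE₀ : IsFusionSystem T E₀) (hE₀F : ∀ f X Y, E₀ f X Y → Famb f X Y)
    (hΦ : ∀ f X Y, Φ f X Y → E₀ f X Y) : IsFusionSystem T (GenFS T Famb Φ) := by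
  have base : ∀ {f X Y}, GenFS T Famb Φ f X Y → E₀ f X Y := fun h => h E₀ hE₀ hE₀F hΦ
  refine
    { le_base := fun f X Y h => hE₀.le_base f X Y (base h)
      mapsTo := fun f X Y h => hE₀.mapsTo f X Y (base h)
      injOn := fun f X Y h => hE₀.injOn f X Y (base h)
      map_mul' := fun f X Y h => hE₀.map_mul' f X Y (base h)
      of_eqOn := fun f g X Y h hgf E hE h₁ h₂ => hE.of_eqOn f g X Y (h E hE h₁ h₂) hgf
      conj_mem := fun g hg X Y hX hY hXY E hE _ _ => hE.conj_mem g hg X Y hX hY hXY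
      comp_mem := fun f g X Y Z hf hg E hE h₁ h₂ =>
        hE.comp_mem f g X Y Z (hf E hE h₁ h₂) (hg E hE h₁ h₂)
      restrict_mem := fun f X Y X₀ Y₀ h hX₀ hY₀ hmaps E hE h₁ h₂ =>
        hE.restrict_mem f X Y X₀ Y₀ (h E hE h₁ h₂) hX₀ hY₀ hmaps
      corestrict_mem := fun f X Y h E hE h₁ h₂ => hE.corestrict_mem f X Y (h E hE h₁ h₂)
      inv_mem := fun f X Y h => ?_ }
  -- an inverse is determined on the image, so the one found in `E₀` serves in every `E`
  obtain ⟨g, -, hgf⟩ := hE₀.inv_mem f X Y (base h)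
  refine ⟨g, fun E hE h₁ h₂ => ?_, hgf⟩
  obtain ⟨g', hg', hg'f⟩ := hE.inv_mem f X Y (h E hE h₁ h₂)
  refine hE.of_eqOn g' g _ X hg' ?_
  change EqOn g g' (imageSubgroup f X)
  rw [hE₀.coe_imageSubgroup (base h)]
  rintro _ ⟨x, hx, rfl⟩
  rw [hgf x hx, hg'f x hx]

/-- `N_F(V)` is the smallest fusion system between `NPhi F V` and `F`, and this one lies between
them, so every `N_F(V)`-morphism extends over `V`. -/
def NExt (F : HomPred S) (V : Subgroup S) : HomPred S := fun f X Y =>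
  F f X Y ∧ X ≤ normalizer (V : Set S) ∧ Y ≤ normalizer (V : Set S) ∧
    ∃ g, F g (V ⊔ X) ⊤ ∧ EqOn g f X ∧ g '' V = V

section NormalizerFusion

variable {F : HomPred S} {V : Subgroup S} {f : S → S} {X Y : Subgroup S}

theorem isFusionSystem_nExt (hF : IsFusionSystem ⊤ F) (V : Subgroup S) :
    IsFusionSystem (normalizer (V : Set S)) (NExt F V) where
  le_base f X Y h := ⟨h.2.1, h.2.2.1⟩
  mapsTo f X Y h := hF.mapsTo f X Y h.1
  injOn f X Y h := hF.injOn f X Y h.1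
  map_mul' f X Y h := hF.map_mul' f X Y h.1
  of_eqOn f f' X Y h hf' := by
    obtain ⟨hf, hX, hY, g, hg, hgf, hgV⟩ := h
    exact ⟨hF.of_eqOn f f' X Y hf hf', hX, hY, g, hg, fun x hx => (hgf hx).trans (hf' hx).symm, hgV⟩
  conj_mem c hc X Y hX hY hXY :=
    ⟨hF.conj_mem c trivial X Y le_top le_top hXY, hX, hY, _,
      hF.conj_mem c trivial _ ⊤ le_top le_top fun _ _ => trivial, fun _ _ => rfl,
      conj_image_eq_of_mem_normalizer hc⟩
  comp_mem f₁ f₂ X Y Z h₁ h₂ := by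
    obtain ⟨hf₁, hX, -, g₁, hg₁, hg₁f, hg₁V⟩ := h₁
    obtain ⟨hf₂, -, hZ, g₂, hg₂, hg₂f, hg₂V⟩ := h₂
    have hg₁Y : MapsTo g₁ X Y := fun x hx => hg₁f hx ▸ hF.mapsTo f₁ X Y hf₁ hx
    have hg₁' : F g₁ (V ⊔ X) (V ⊔ Y) := hF.restrict_mem g₁ _ ⊤ _ _ hg₁ le_rfl le_top
      (hF.mapsTo_sup hg₁ le_rfl (mapsTo_iff_image_subset.2 hg₁V.subset) hg₁Y)
    refine ⟨hF.comp_mem f₁ f₂ X Y Z hf₁ hf₂, hX, hZ, g₂ ∘ g₁,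
      hF.comp_mem g₁ g₂ _ _ ⊤ hg₁' hg₂, fun x hx => ?_, by rw [image_comp, hg₁V, hg₂V]⟩
    simp only [Function.comp_apply, hg₁f hx, hg₂f (hF.mapsTo f₁ X Y hf₁ hx)]
  restrict_mem f X Y X₀ Y₀ h hX₀ hY₀ hmaps := by
    obtain ⟨hf, hX, hY, g, hg, hgf, hgV⟩ := h
    exact ⟨hF.restrict_mem f X Y X₀ Y₀ hf hX₀ hY₀ hmaps, hX₀.trans hX, hY₀.trans hY, g,
      hF.restrict hg (sup_le_sup_left hX₀ V), hgf.mono hX₀, hgV⟩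
  corestrict_mem f X Y h := by
    obtain ⟨hf, hX, hY, hext⟩ := h
    exact ⟨hF.corestrict_mem f X Y hf, hX, (hF.imageSubgroup_le hf).trans hY, hext⟩
  inv_mem f X Y h := by
    obtain ⟨hf, hX, hY, g, hg, hgf, hgV⟩ := h
    have hgX : g '' X = imageSubgroup f X := by
      rw [image_congr hgf, hF.coe_imageSubgroup hf]
    obtain ⟨g', hg', hinv⟩ := hF.exists_invOn
      (hF.isFIso_of_image hg le_rfl (hF.image_sup hg le_rfl hgV hgX))
    have hg'X : g' '' imageSubgroup f X = X := by
      rw [← hgX, hinv.1.image_image' (SetLike.coe_subset_coe.2 le_sup_right)]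
    have hg'V : g' '' V = V := by
      simpa only [hgV] using hinv.1.image_image' (SetLike.coe_subset_coe.2 le_sup_left)
    have hg'f : ∀ x ∈ X, g' (f x) = x := fun x hx => by
      rw [← hgf hx, hinv.1 (SetLike.coe_subset_coe.2 le_sup_right hx)]
    refine ⟨g', ⟨(hF.isFIso_of_image hg'.1 le_sup_right hg'X).1,
      (hF.imageSubgroup_le hf).trans hY, hX, g', hF.mono_codomain hg'.1 le_top le_rfl,
      fun _ _ => rfl, hg'V⟩, hg'f⟩

theorem nPhi_le_nExt (hF : IsFusionSystem ⊤ F) : ∀ f X Y, NPhi F V f X Y → NExt F V f X Y := by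
  rintro f X Y ⟨hX, hY, hf, g, hg, hgf, hgV⟩
  exact ⟨hf.1, hX, hY, g, hF.mono_codomain (sup_comm X V ▸ hg.1) le_top le_rfl, hgf, hgV⟩

theorem isFusionSystem_nFus (hF : IsFusionSystem ⊤ F) (V : Subgroup S) :
    IsFusionSystem (normalizer (V : Set S)) (NFus F V) :=
  isFusionSystem_genFS (isFusionSystem_nExt hF V) (fun _ _ _ h => h.1) (nPhi_le_nExt hF)

theorem nExt_of_nFus (hF : IsFusionSystem ⊤ F) (h : NFus F V f X Y) : NExt F V f X Y :=
  h _ (isFusionSystem_nExt hF V) (fun _ _ _ h => h.1) (nPhi_le_nExt hF)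

theorem image_eq_of_nFus (hF : IsFusionSystem ⊤ F) (h : NFus F V f X Y) (hVX : V ≤ X) :
    f '' V = V := by
  obtain ⟨-, -, -, g, -, hgf, hgV⟩ := nExt_of_nFus hF h
  rw [← image_congr (hgf.mono hVX), hgV]

theorem nFus_of_hom (hF : IsFusionSystem ⊤ F) (hf : F f X Y) (hX : X ≤ normalizer (V : Set S))
    (hY : Y ≤ normalizer (V : Set S)) (hVX : V ≤ X) (hfV : f '' V = V) : NFus F V f X Y := by
  have hP : IsFIso F f X (imageSubgroup f X) := hF.isFIso_imageSubgroup hf le_rfl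
  have hVP : V ≤ imageSubgroup f X := by
    rw [← SetLike.coe_subset_coe, ← hP.2, ← hfV]
    exact image_mono hVX
  have hPhi : NPhi F V f X (imageSubgroup f X) :=
    ⟨hX, (hF.imageSubgroup_le hf).trans hY, hP, f,
      by rwa [sup_eq_left.2 hVX, sup_eq_left.2 hVP], fun _ _ => rfl, hfV⟩
  exact (isFusionSystem_nFus hF V).mono_codomain (fun E _ _ hΦ => hΦ f X _ hPhi)
    (hF.imageSubgroup_le hf) hY

end NormalizerFusion

namespace IsStratification

variable {T : Subgroup S} {F : HomPred S} {Ω : Set (Subgroup S)}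
  {star : Subgroup S → Subgroup S} {A B : Subgroup S}

theorem bddAbove_chains (hΩ : IsStratification T F Ω star) (A : Subgroup S) :
    BddAbove {n | ∃ c : Fin (n + 1) → Subgroup S,
      StrictMono c ∧ (∀ i, c i ∈ Ω) ∧ c (Fin.last n) = A} := by
  obtain ⟨N, hN⟩ := hΩ.finDim
  exact ⟨N, fun n ⟨c, hc, hcΩ, _⟩ => hN n ⟨c, hc, hcΩ⟩⟩

theorem le_dimEnd (hΩ : IsStratification T F Ω star) {n : ℕ} {c : Fin (n + 1) → Subgroup S}
    (hc : StrictMono c) (hcΩ : ∀ i, c i ∈ Ω) (hcA : c (Fin.last n) = A) : n ≤ dimEnd Ω A :=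
  le_csSup (hΩ.bddAbove_chains A) ⟨c, hc, hcΩ, hcA⟩

theorem dimEnd_strictMonoOn (hΩ : IsStratification T F Ω star) : StrictMonoOn (dimEnd Ω) Ω := by
  intro A hA B hB hAB
  obtain ⟨c, hc, hcΩ, hcA⟩ : ∃ c : Fin (dimEnd Ω A + 1) → Subgroup S,
      StrictMono c ∧ (∀ i, c i ∈ Ω) ∧ c (Fin.last _) = A :=
    Nat.sSup_mem
      (by exact ⟨0, fun _ => A, Subsingleton.strictMono (α := Fin 1) _, fun _ => hA, rfl⟩)
      (hΩ.bddAbove_chains A)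
  refine Nat.lt_of_succ_le (hΩ.le_dimEnd (c := Fin.snoc c B) ?_ ?_ (Fin.snoc_last _ _))
  · rw [Fin.strictMono_iff_lt_succ]
    refine Fin.lastCases ?_ fun i => ?_
    · simpa only [Fin.succ_last, Fin.snoc_last, Fin.snoc_castSucc, hcA] using hAB
    · simpa only [Fin.succ_castSucc, Fin.snoc_castSucc] using hc i.castSucc_lt_succ
  · exact Fin.lastCases (by simpa only [Fin.snoc_last] using hB)
      fun i => by simpa only [Fin.snoc_castSucc] using hcΩ i

theorem star_eq_of_dimStar_le (hΩ : IsStratification T F Ω star) (hAB : A ≤ B) (hB : B ≤ T)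
    (h : dimStar Ω star B ≤ dimStar Ω star A) : star A = star B := by
  have hA := hAB.trans hB
  refine (hΩ.star_mono A B hA hB hAB).eq_of_not_lt fun hlt => ?_
  exact (hΩ.dimEnd_strictMonoOn (hΩ.star_mem A hA) (hΩ.star_mem B hB) hlt).not_ge h

theorem dimEnd_le_of_isFIso (hF : IsFusionSystem T F) (hΩ : IsStratification T F Ω star)
    {f : S → S} (hf : IsFIso F f A B) : dimEnd Ω A ≤ dimEnd Ω B := by
  refine csSup_le' fun n ⟨c, hc, hcΩ, hcA⟩ => ?_
  have hcA' : ∀ i, c i ≤ A := fun i => hcA ▸ hc.monotone (Fin.le_last i)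
  refine hΩ.le_dimEnd (c := fun i => imageSubgroup f (c i)) (fun i j hij => ?_)
    (fun i => hΩ.conj_invariant _ (hcΩ i) f _ (hF.isFIso_imageSubgroup hf.1 (hcA' i)))
    (by simp only [hcA, hF.imageSubgroup_eq hf])
  rw [← SetLike.coe_ssubset_coe, hF.coe_imageSubgroup (hF.restrict hf.1 (hcA' i)),
    hF.coe_imageSubgroup (hF.restrict hf.1 (hcA' j)),
    (hF.injOn f A B hf.1).image_ssubset_image_iff (SetLike.coe_subset_coe.2 (hcA' i))
      (SetLike.coe_subset_coe.2 (hcA' j))]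
  exact hc hij

theorem dimStar_eq_of_isFIso (hF : IsFusionSystem T F) (hΩ : IsStratification T F Ω star)
    {f : S → S} (hf : IsFIso F f A B) : dimStar Ω star A = dimStar Ω star B := by
  obtain ⟨g, hg, -⟩ := hΩ.extend_star f A B hf
  obtain ⟨g', hg', -⟩ := hF.exists_invOn hg
  exact (hΩ.dimEnd_le_of_isFIso hF hg).antisymm (hΩ.dimEnd_le_of_isFIso hF hg')

theorem dimStar_le_of_hom (hF : IsFusionSystem T F) (hΩ : IsStratification T F Ω star)
    {f : S → S} (hf : F f A B) : dimStar Ω star A ≤ dimStar Ω star B := by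
  have hB := (hF.le_base f A B hf).2
  have hfA := hF.imageSubgroup_le hf
  rw [hΩ.dimStar_eq_of_isFIso hF (hF.isFIso_imageSubgroup hf le_rfl)]
  exact hΩ.dimEnd_strictMonoOn.monotoneOn (hΩ.star_mem _ (hfA.trans hB)) (hΩ.star_mem B hB)
    (hΩ.star_mono _ B (hfA.trans hB) hB hfA)

end IsStratification

section NormalizerInductive

variable {T : Subgroup S} {F : HomPred S} {Ω : Set (Subgroup S)}
  {star : Subgroup S → Subgroup S} {R Y : Subgroup S}

/-- If the `F`-homomorphism `χ : N_T(R) → N_T(Y)` does not lose dimension, its image has the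
same closure `⋆` as `N_T(Y)`, so extending the inverse of `χ` to that closure reverses `χ`. -/
theorem exists_hom_normalizer_of_dimStar_le (hF : IsFusionSystem T F)
    (hΩ : IsStratification T F Ω star) (hRT : R ≤ T) {χ : S → S}
    (hχ : F χ (normalizer (R : Set S) ⊓ T) (normalizer (Y : Set S) ⊓ T)) (hχR : χ '' R = Y)
    (hdim : dimStar Ω star (normalizer (Y : Set S) ⊓ T) ≤
      dimStar Ω star (normalizer (R : Set S) ⊓ T)) :
    ∃ Ψ, F Ψ (normalizer (Y : Set S) ⊓ T) (normalizer (R : Set S) ⊓ T) ∧ Ψ '' Y = R := by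
  set NR := normalizer (R : Set S) ⊓ T
  set NY := normalizer (Y : Set S) ⊓ T
  have hNR : NR ≤ T := inf_le_right
  have hNY : NY ≤ T := inf_le_right
  have hRNR : R ≤ NR := le_inf le_normalizer hRT
  have hχM := hF.isFIso_imageSubgroup hχ le_rfl
  have hstar : star (imageSubgroup χ NR) = star NY :=
    hΩ.star_eq_of_dimStar_le (hF.imageSubgroup_le hχ) hNY
      (by rwa [← hΩ.dimStar_eq_of_isFIso hF hχM])
  obtain ⟨ψ, hψ, hinv⟩ := hF.exists_invOn hχM
  obtain ⟨Ψ, hΨ, hΨψ⟩ := hΩ.extend_star ψ _ NR hψ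
  have hYM : (Y : Set S) ⊆ imageSubgroup χ NR := by
    rw [← hχR, ← hχM.2]
    exact image_mono hRNR
  have hΨY : Ψ '' Y = R := by
    rw [image_congr (hΨψ.mono hYM), ← hχR, hinv.1.image_image' hRNR]
  have hNYM : NY ≤ star (imageSubgroup χ NR) := hstar ▸ hΩ.le_star NY hNY
  refine ⟨Ψ, hF.restrict_mem Ψ _ _ NY NR hΨ.1 hNYM (hΩ.le_star NR hNR) fun x hx => ⟨?_, ?_⟩, hΨY⟩
  · exact hF.mapsTo_normalizer hΨ.1 ((SetLike.coe_subset_coe.1 hYM).trans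
      (hΩ.le_star _ ((hF.imageSubgroup_le hχ).trans hNY))) hΨY ⟨hNYM hx, hx.1⟩
  · exact (hF.le_base _ _ _ hΨ.1).2 (hF.mapsTo _ _ _ hΨ.1 (hNYM hx))

theorem normalizerInductive_of_fullyNormalized (hF : IsFusionSystem T F)
    (hΩ : IsStratification T F Ω star) (hR : FullyNormalizedIn T F Ω star R)
    (hY : Y ∈ FConj F R) (hYni : NormalizerInductive T F Y) : NormalizerInductive T F R := by
  have hYR := hF.fConj_symm hY
  obtain ⟨χ, hχ, hχR⟩ := hYni R hYR
  obtain ⟨f, hf⟩ := hY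
  obtain ⟨Ψ, hΨ, hΨY⟩ := exists_hom_normalizer_of_dimStar_le hF hΩ (hF.le_base f R Y hf.1).1
    hχ hχR (hR Y ⟨f, hf⟩)
  intro X hX
  obtain ⟨φ, hφ, hφX⟩ := hYni X (hF.fConj_trans hYR hX)
  exact ⟨Ψ ∘ φ, hF.comp_mem φ Ψ _ _ _ hφ hΨ, by rw [image_comp, hφX, hΨY]⟩

theorem fullyNormalized_of_normalizerInductive (hF : IsFusionSystem T F)
    (hΩ : IsStratification T F Ω star) (hR : NormalizerInductive T F R) :
    FullyNormalizedIn T F Ω star R := fun U hU =>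
  let ⟨_, hφ, _⟩ := hR U hU
  hΩ.dimStar_le_of_hom hF hφ

end NormalizerInductive

section Bullet

variable {F : HomPred S} {Ω : Set (Subgroup S)} {star : Subgroup S → Subgroup S}
  {V X Y : Subgroup S}

theorem le_bulletStar (hΩ : IsStratification ⊤ F Ω star) (hX : X ≤ normalizer (V : Set S))
    (hXY : X ≤ V ⊔ Y) : X ≤ bulletStar star V Y :=
  le_inf (hXY.trans (hΩ.le_star _ le_top)) hX

theorem bulletStar_bulletStar (hΩ : IsStratification ⊤ F Ω star)
    (hX : X ≤ normalizer (V : Set S)) :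
    bulletStar star V (bulletStar star V X) = bulletStar star V X := by
  have hle : V ⊔ bulletStar star V X ≤ star (V ⊔ X) :=
    sup_le (le_sup_left.trans (hΩ.le_star _ le_top)) inf_le_left
  have h : star (V ⊔ bulletStar star V X) = star (V ⊔ X) := by
    refine le_antisymm ?_ (hΩ.star_mono _ _ le_top le_top
      (sup_le_sup_left (le_bulletStar hΩ hX le_sup_right) V))
    simpa only [hΩ.star_fix _ (hΩ.star_mem _ le_top)] using
      hΩ.star_mono _ _ le_top le_top hle
  exact congrArg (· ⊓ normalizer (V : Set S)) h

theorem bulletStar_eq_of_mem (hΩ : IsStratification ⊤ F Ω star)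
    (hX : X ∈ bulletOmega star V) : bulletStar star V X = X := by
  obtain ⟨X, hX, rfl⟩ := hX
  exact bulletStar_bulletStar hΩ hX

theorem exists_extension_bulletStar (hF : IsFusionSystem ⊤ F)
    (hΩ : IsStratification ⊤ F Ω star) {f : S → S} (hf : NFus F V f X Y) (hfX : f '' X = Y) :
    ∃ G, IsFIso F G (star (V ⊔ X)) (star (V ⊔ Y)) ∧ EqOn G f X ∧ G '' V = V ∧
      G '' bulletStar star V X = bulletStar star V Y := by
  obtain ⟨-, -, -, g, hg, hgf, hgV⟩ := nExt_of_nFus hF hf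
  have hg' : IsFIso F g (V ⊔ X) (V ⊔ Y) := hF.isFIso_of_image hg le_rfl
    (hF.image_sup hg le_rfl hgV (by rw [image_congr hgf, hfX]))
  obtain ⟨G, hG, hGg⟩ := hΩ.extend_star g _ _ hg'
  have hGV : G '' V = V := by
    rw [image_congr (hGg.mono (SetLike.coe_subset_coe.2 le_sup_left)), hgV]
  exact ⟨G, hG, fun x hx => (hGg (SetLike.coe_subset_coe.2 le_sup_right hx)).trans (hgf hx),
    hGV, hF.image_inf_normalizer hG (le_sup_left.trans (hΩ.le_star _ le_top)) hGV⟩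

theorem isStratification_bullet (hF : IsFusionSystem ⊤ F) (hΩ : IsStratification ⊤ F Ω star)
    (V : Subgroup S) :
    IsStratification (normalizer (V : Set S)) (NFus F V) (bulletOmega star V) (bulletStar star V)
    where
  omega_le A := by
    rintro ⟨X, -, rfl⟩
    exact inf_le_right
  star_mem X hX := ⟨X, hX, rfl⟩
  star_fix _ hA := bulletStar_eq_of_mem hΩ hA
  star_mono X Y _ _ hXY :=
    inf_le_inf_right _ (hΩ.star_mono _ _ le_top le_top (sup_le_sup_left hXY V))
  finDim := by
    obtain ⟨N, hN⟩ := hΩ.finDim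
    refine ⟨N, fun n ⟨c, hc, hcΩ⟩ =>
      hN n ⟨fun i => star (V ⊔ c i), ?_, fun i => hΩ.star_mem _ le_top⟩⟩
    refine Monotone.strictMono_of_injective (fun i j hij => hΩ.star_mono _ _ le_top le_top
      (sup_le_sup_left (hc.monotone hij) V)) fun i j hij => hc.injective ?_
    rw [← bulletStar_eq_of_mem hΩ (hcΩ i), ← bulletStar_eq_of_mem hΩ (hcΩ j)]
    exact congrArg (· ⊓ normalizer (V : Set S)) hij
  conj_invariant A hA f B hf := by
    obtain ⟨G, -, hGf, -, hGA⟩ := exists_extension_bulletStar hF hΩ hf.1 hf.2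
    refine ⟨B, ((isFusionSystem_nFus hF V).le_base f A B hf.1).2, SetLike.coe_injective ?_⟩
    rw [← hGA, bulletStar_eq_of_mem hΩ hA, image_congr hGf, hf.2]
  le_star X hX := le_bulletStar hΩ hX le_sup_right
  extend_star f X Y hf := by
    obtain ⟨G, hG, hGf, hGV, hGX⟩ := exists_extension_bulletStar hF hΩ hf.1 hf.2
    refine ⟨G, ⟨nFus_of_hom hF (hF.isFIso_of_image hG.1 inf_le_left hGX).1
      inf_le_right inf_le_right (le_bulletStar hΩ le_normalizer le_sup_left) hGV, hGX⟩, hGf⟩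

end Bullet

section StronglyClosed

variable {F : HomPred S} {T : Subgroup S} {f : S → S} {X Y : Subgroup S}

theorem StronglyClosedF.mapsTo {B : Subgroup S} (hT : StronglyClosedF F T)
    (hF : IsFusionSystem B F) (hf : F f X Y) (hX : X ≤ T) : MapsTo f X T := fun _ hx =>
  have hf' := hF.isFIso_imageSubgroup hf le_rfl
  hT X hX _ ⟨f, hf'⟩ (hf'.2 ▸ mem_image_of_mem f hx :)

theorem StronglyClosedF.normal (hT : StronglyClosedF F T) (hF : IsFusionSystem ⊤ F) : T.Normal :=
  ⟨fun t ht g => by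
    simpa using hT.mapsTo hF (hF.conj_mem g⁻¹ trivial T ⊤ le_top le_top fun _ _ => trivial)
      le_rfl ht⟩

theorem StronglyClosedF.normalizer_le (hT : StronglyClosedF F T) (hF : IsFusionSystem ⊤ F)
    (X : Subgroup S) : normalizer (X : Set S) ≤ normalizer (X ⊓ T : Subgroup S) := by
  have := hT.normal hF
  exact (le_inf le_rfl (normalizer_eq_top (H := T) ▸ le_top)).trans
    inf_normalizer_le_normalizer_inf

theorem StronglyClosedF.image_inf {B : Subgroup S} (hT : StronglyClosedF F T)
    (hF : IsFusionSystem B F) (hf : IsFIso F f X Y) :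
    f '' (X ⊓ T : Subgroup S) = (Y ⊓ T : Subgroup S) := by
  obtain ⟨g, hg, hinv⟩ := hF.exists_invOn hf
  refine ((hinv.mono (fun _ hx => hx.1) (fun _ hy => hy.1)).bijOn ?_ ?_).image_eq
  · exact fun x hx => ⟨hF.mapsTo f X Y hf.1 hx.1,
      hT.mapsTo hF (hF.restrict hf.1 inf_le_left) inf_le_right hx⟩
  · exact fun y hy => ⟨hF.mapsTo g Y X hg.1 hy.1,
      hT.mapsTo hF (hF.restrict hg.1 inf_le_left) inf_le_right hy⟩

end StronglyClosed

section Transport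

variable {F : HomPred S} {T Q : Subgroup S}

theorem exists_transport_normalizer (hF : IsFusionSystem ⊤ F) (hT : StronglyClosedF F T)
    (hV : NormalizerInductive ⊤ F (Q ⊓ T)) {U : Subgroup S} (hU : U ∈ FConj F Q) :
    ∃ α, ∃ P : Subgroup S, F α (normalizer (U : Set S)) (normalizer (Q ⊓ T : Subgroup S)) ∧
      α '' (U ⊓ T : Subgroup S) = Q ⊓ T ∧ α '' U = P ∧ P ∈ FConj (NFus F (Q ⊓ T)) Q := by
  obtain ⟨φ, hφ⟩ := hU
  have hφV := hT.image_inf hF hφ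
  obtain ⟨α, hα, hαV⟩ := hV (U ⊓ T) ⟨φ, hF.isFIso_of_image hφ.1 inf_le_left hφV⟩
  rw [inf_top_eq, inf_top_eq] at hα
  have hαU := hF.restrict hα (hT.normalizer_le hF U)
  have hP := hF.isFIso_imageSubgroup hαU le_normalizer
  have hQP := hF.isFIso_comp hφ hP
  refine ⟨α, _, hαU, hαV, hP.2, α ∘ φ, nFus_of_hom hF hQP.1
    (le_normalizer.trans (hT.normalizer_le hF Q)) (hF.image_le hαU le_normalizer hP.2)
    inf_le_left (by rw [image_comp, hφV, hαV]), hQP.2⟩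

theorem normalizerInductive_nFus_of_image (hF : IsFusionSystem ⊤ F) (hT : StronglyClosedF F T)
    {V Qt Y₀ : Subgroup S} {α : S → S} (hQt : NormalizerInductive ⊤ F Qt)
    (hα : F α (normalizer (Qt : Set S)) (normalizer (V : Set S)))
    (hαV : α '' (Qt ⊓ T : Subgroup S) = V) (hαQt : α '' Qt = Y₀) :
    NormalizerInductive (normalizer (V : Set S)) (NFus F V) Y₀ := by
  have hαQt' := hF.isFIso_of_image hα le_normalizer hαQt
  have hY₀V : Y₀ ⊓ T = V := SetLike.coe_injective ((hT.image_inf hF hαQt').symm.trans hαV)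
  rintro P ⟨h, hh, hhY₀⟩
  have hhV : h '' V = V := image_eq_of_nFus hF hh (hY₀V ▸ inf_le_left)
  have hh' : IsFIso F h Y₀ P := ⟨(nExt_of_nFus hF hh).1, hhY₀⟩
  have hPV : P ⊓ T = V := SetLike.coe_injective (by rw [← hT.image_inf hF hh', hY₀V, hhV])
  obtain ⟨l, hl, hlP⟩ := hQt P ⟨h ∘ α, hF.isFIso_comp hαQt' hh'⟩
  rw [inf_top_eq, inf_top_eq] at hl
  have hlV : l '' V = Qt ⊓ T := by
    rw [← hPV]
    exact hT.image_inf hF (hF.isFIso_of_image hl le_normalizer hlP)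
  have hβ := hF.comp_mem l α _ _ _ hl hα
  have hβP : (α ∘ l) '' P = Y₀ := by rw [image_comp, hlP, hαQt]
  refine ⟨α ∘ l, nFus_of_hom hF
    (hF.restrict_normalizer hβ (le_inf inf_le_left inf_le_left) le_normalizer hβP)
    inf_le_right inf_le_right (le_inf ((hPV ▸ inf_le_left).trans le_normalizer) le_normalizer)
    (by rw [image_comp, hlV, hαV]), hβP⟩

theorem normalizerInductive_of_normalizerInductive_nFus (hF : IsFusionSystem ⊤ F)
    (hT : StronglyClosedF F T) (hV : NormalizerInductive ⊤ F (Q ⊓ T))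
    (hQ : NormalizerInductive (normalizer (Q ⊓ T : Subgroup S)) (NFus F (Q ⊓ T)) Q) :
    NormalizerInductive ⊤ F Q := by
  intro U hU
  obtain ⟨α, P, hα, -, hαU, hP⟩ := exists_transport_normalizer hF hT hV hU
  obtain ⟨β, hβ, hβP⟩ := hQ P hP
  rw [inf_top_eq, inf_top_eq]
  refine ⟨β ∘ α, ?_, by rw [image_comp, hαU, hβP]⟩
  exact hF.mono_codomain (hF.comp_mem α β _ _ _
    (hF.restrict_normalizer hα (le_inf le_rfl le_rfl) le_normalizer hαU) (nExt_of_nFus hF hβ).1)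
    inf_le_left le_top

end Transport

/-- Lemma 2.10. Let `T` be strongly closed in `F`, `Q ≤ S`, and
`V = Q ⊓ T`.  If `V ∈ Γ`, `V` is fully normalized in `F`, and `Q` is fully normalized
in `N_F(V)` (with respect to the stratification `(N_Ω(V), •)`), then `Q` is fully
normalized in `F`. -/
theorem fullyNormalized_of_fullyNormalized_in_normalizer
    {S : Type*} [Group S] (F : HomPred S)
    (Ω : Set (Subgroup S)) (star : Subgroup S → Subgroup S)
    (hF : IsFusionSystem ⊤ F) (hΩ : IsStratification ⊤ F Ω star)
    (Γ : Set (Subgroup S)) (hΓ : FClosed F Γ) (hind : GammaInductive ⊤ F Γ)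
    (T Q : Subgroup S) (hT : StronglyClosedF F T)
    (hVΓ : Q ⊓ T ∈ Γ)
    (hVfn : FullyNormalizedIn ⊤ F Ω star (Q ⊓ T))
    (hQfn : FullyNormalizedIn (Subgroup.normalizer ((Q ⊓ T : Subgroup S) : Set S)) (NFus F (Q ⊓ T))
      (bulletOmega star (Q ⊓ T)) (bulletStar star (Q ⊓ T)) Q) :
    FullyNormalizedIn ⊤ F Ω star Q := by
  have hV : NormalizerInductive ⊤ F (Q ⊓ T) :=
    let ⟨_, hY, hYni⟩ := hind _ hVΓ
    normalizerInductive_of_fullyNormalized hF hΩ hVfn hY hYni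
  obtain ⟨Qt, hQt, hQtni⟩ := hind Q (hΓ.2.2 _ hVΓ Q inf_le_left)
  obtain ⟨α, Y₀, hα, hαV, hαQt, hY₀⟩ := exists_transport_normalizer hF hT hV hQt
  have hQ : NormalizerInductive (normalizer (Q ⊓ T : Subgroup S)) (NFus F (Q ⊓ T)) Q :=
    normalizerInductive_of_fullyNormalized (isFusionSystem_nFus hF _)
      (isStratification_bullet hF hΩ _) hQfn hY₀
      (normalizerInductive_nFus_of_image hF hT hQtni hα hαV hαQt)
  exact fullyNormalized_of_normalizerInductive hF hΩ
    (normalizerInductive_of_normalizerInductive_nFus hF hT hV hQ)
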